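/- Let α ∈ (0,1) and γ₂ ∈ (0, 1/2). For each n ∈ ℕ, let (W_j)_{j=1}^n be random variables on a probability space (Ω, F, P) that are independent and each distributed according to the standard normal law N(0,1), and set a_n = ⌊(1−α)n − n^{1−γ₂}⌋ and â_n = ⌊a_n − n^{1−γ₂}⌋. Then there exists Č₀ > 0 such that for every constant Č ≥ Č₀ and every L > 0, P[ | |W|_{(â_n)} − c(α)^{1/2} | ≥ Č·n^{−γ₂} ] = O(n^{−L}) as n → ∞, where |W|_{(â_n)} is the â_n-th smallest of the values |W_1|, …, |W_n|. -/

import Mathlib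

/-!
The `r`-th order statistic of pairwise distinct values is at most `s` exactly when at least
`r` of the values are, so a deviation `||W|_{(r)} - √c| ≥ ε` with `ε = Č n^{-γ₂}` forces the
empirical count of `{|W_j| ≤ √c ∓ ε / 2}` to miss its mean `n F(√c ∓ ε / 2)`, where
`F(t) = P(|W_1| ≤ t)`, by at least `n^{1-γ₂}`. Indeed the density of `|W_1|` is bounded below
near `√c`, so `n F` moves by `≳ Č n^{1-γ₂}` across the window, while `r = â_n` stays within
`2 n^{1-γ₂} + 2` of `n F(√c) = (1 - α) n`. Hoeffding's inequality bounds each miss by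
`exp(-2 n^{1-2γ₂})`, which is `O(n^{-L})` for every `L` because `γ₂ < 1/2`; ties among the
`|W_j|` have probability zero.
-/

open MeasureTheory ProbabilityTheory Filter Finset
open scoped ENNReal

/-- Rank of `x k` within the family `(x k')_{k' ∈ s}`. -/
noncomputable def rankIn (s : Finset ℕ) (x : ℕ → ℝ) (k : ℕ) : ℕ :=
  (s.filter fun k' => x k' ≤ x k).card

/-- The `r`-th order statistic (the `r`-th smallest value) of the family `(x k)_{k ∈ s}`.
For a family with pairwise distinct values, this is the unique value of rank `r`. -/
noncomputable def orderStatIn (s : Finset ℕ) (x : ℕ → ℝ) (r : ℕ) : ℝ :=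
  if h : ∃ k, k ∈ s ∧ rankIn s x k = r then x h.choose else 0

section EmpiricalCount

variable {Ω ι : Type*} [MeasurableSpace Ω] {P : Measure Ω} [IsProbabilityMeasure P]
  {X : ι → Ω → ℝ} {s : Finset ι} {t p : ℝ}

lemma hasSubgaussianMGF_card_filter_le_sub (hX : ∀ i, Measurable (X i))
    (hindep : iIndepFun X P) (hp : ∀ i ∈ s, P.real {ω | X i ω ≤ t} = p) :
    HasSubgaussianMGF (fun ω => (#(s.filter fun i => X i ω ≤ t) : ℝ) - #s * p) (#s / 4) P := by
  set g : ℝ → ℝ := fun x => (Set.Iic t).indicator 1 x - p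
  have hg : Measurable g := (measurable_one.indicator measurableSet_Iic).sub_const p
  have hsub : ∀ i ∈ s, HasSubgaussianMGF (fun ω => g (X i ω)) (1 / 4) P := by
    intro i hi
    have hind : Measurable fun ω => (Set.Iic t).indicator (1 : ℝ → ℝ) (X i ω) :=
      (measurable_one.indicator measurableSet_Iic).comp (hX i)
    have hmean : P[fun ω => (Set.Iic t).indicator (1 : ℝ → ℝ) (X i ω)] = p := by
      rw [← hp i hi]
      exact integral_indicator_one (measurableSet_Iic.preimage (hX i))
    have := hasSubgaussianMGF_of_mem_Icc (a := 0) (b := 1) hind.aemeasurable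
      (ae_of_all P fun ω => by
        by_cases h : X i ω ≤ t <;> simp [h])
    rw [hmean] at this
    convert this using 1
    norm_num
  have hsum := HasSubgaussianMGF.sum_of_iIndepFun (hindep.comp (fun _ => g) fun _ => hg) hsub
  convert hsum using 1
  · ext ω
    simp [g, Finset.sum_sub_distrib, Set.indicator_apply]
  · simp only [one_div, sum_const, nsmul_eq_mul]
    ring

lemma card_filter_Icc_one_eq (n : ℕ) (q : ℕ → Prop) [DecidablePred q] :
    #((Icc 1 n).filter q) = #(univ.filter fun j : Fin n => q (j + 1)) := by
  symm
  refine card_nbij (fun j => j.1 + 1) (fun j hj => ?_) (fun i _ j _ h => ?_) (fun k hk => ?_)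
  · simp only [coe_filter, mem_univ, true_and, Set.mem_ofPred_eq, mem_Icc] at hj ⊢
    exact ⟨⟨by omega, j.2⟩, hj⟩
  · exact Fin.ext (by simpa using h)
  · simp only [coe_filter, mem_Icc, Set.mem_ofPred_eq] at hk
    refine ⟨⟨k - 1, by omega⟩, by simpa [Nat.sub_add_cancel hk.1.1] using hk.2, by simp; omega⟩

lemma hasSubgaussianMGF_card_filter_Icc_le_sub {n : ℕ} {V : ℕ → Ω → ℝ} (hV : ∀ j, Measurable (V j))
    (hindep : iIndepFun (fun j : Fin n => V (j.1 + 1)) P)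
    (hp : ∀ j ∈ Icc 1 n, P.real {ω | V j ω ≤ t} = p) :
    HasSubgaussianMGF (fun ω => (#((Icc 1 n).filter fun k => V k ω ≤ t) : ℝ) - n * p)
      (n / 4) P := by
  have h := hasSubgaussianMGF_card_filter_le_sub (s := univ) (fun j => hV _) hindep
    fun j _ => hp _ (mem_Icc.2 ⟨by omega, j.2⟩)
  simp only [card_univ, Fintype.card_fin] at h
  simpa only [card_filter_Icc_one_eq] using h

end EmpiricalCount

section OrderStatistic

variable {s : Finset ℕ} {x : ℕ → ℝ} {k l r : ℕ}

lemma rankIn_lt_rankIn (hl : l ∈ s) (h : x k < x l) : rankIn s x k < rankIn s x l := by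
  refine card_lt_card ((ssubset_iff_of_subset fun j hj => ?_).2 ⟨l, ?_, ?_⟩)
  · simp only [mem_filter] at hj ⊢
    exact ⟨hj.1, hj.2.trans h.le⟩
  · simp [hl]
  · simp [hl, h]

lemma rankIn_injOn (hinj : Set.InjOn x s) : Set.InjOn (rankIn s x) s := by
  intro k hk l hl h
  refine hinj hk hl (le_antisymm ?_ ?_)
  · exact not_lt.1 fun hlt => (rankIn_lt_rankIn hk hlt).ne' h
  · exact not_lt.1 fun hlt => (rankIn_lt_rankIn hl hlt).ne h

lemma rankIn_mem_Icc (hk : k ∈ s) : rankIn s x k ∈ Icc 1 #s :=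
  mem_Icc.2 ⟨card_pos.2 ⟨k, by simp [hk]⟩, card_filter_le _ _⟩

lemma image_rankIn (hinj : Set.InjOn x s) : s.image (rankIn s x) = Icc 1 #s := by
  refine eq_of_subset_of_card_le (fun r hr => ?_) ?_
  · obtain ⟨k, hk, rfl⟩ := mem_image.1 hr
    exact rankIn_mem_Icc hk
  · rw [card_image_of_injOn (rankIn_injOn hinj), Nat.card_Icc, Nat.add_sub_cancel]

lemma orderStatIn_eq (hinj : Set.InjOn x s) (hk : k ∈ s) (hr : rankIn s x k = r) :
    orderStatIn s x r = x k := by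
  have h : ∃ k, k ∈ s ∧ rankIn s x k = r := ⟨k, hk, hr⟩
  rw [orderStatIn, dif_pos h]
  obtain ⟨hk', hr'⟩ := h.choose_spec
  rw [rankIn_injOn hinj hk' hk (hr'.trans hr.symm)]

lemma orderStatIn_le_iff (hinj : Set.InjOn x s) (hr : r ∈ Icc 1 #s) {t : ℝ} :
    orderStatIn s x r ≤ t ↔ r ≤ #(s.filter fun k => x k ≤ t) := by
  obtain ⟨k, hk, rfl⟩ := mem_image.1 ((image_rankIn hinj).symm ▸ hr)
  rw [orderStatIn_eq hinj hk rfl]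
  constructor
  · refine fun hkt => card_le_card fun j hj => ?_
    simp only [mem_filter] at hj ⊢
    exact ⟨hj.1, hj.2.trans hkt⟩
  · intro hcard
    by_contra! htk
    refine (card_lt_card ((ssubset_iff_of_subset fun j hj => ?_).2 ⟨k, ?_, ?_⟩)).not_ge hcard
    · simp only [mem_filter] at hj ⊢
      exact ⟨hj.1, hj.2.trans htk.le⟩
    · simp [hk]
    · simp [hk, htk]

lemma le_card_filter_or_card_filter_lt (hinj : Set.InjOn x s) (hr : r ∈ Icc 1 #s) {t ε : ℝ}
    (hε : 0 < ε) (h : ε ≤ |orderStatIn s x r - t|) :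
    r ≤ #(s.filter fun k => x k ≤ t - ε / 2) ∨ #(s.filter fun k => x k ≤ t + ε / 2) < r := by
  rcases le_abs'.1 h with h | h
  · exact .inl ((orderStatIn_le_iff hinj hr).1 (by linarith))
  · exact .inr (not_le.1 fun hle => ((orderStatIn_le_iff hinj hr).2 hle).not_gt (by linarith))

end OrderStatistic

section Ties

variable {Ω : Type*} [MeasurableSpace Ω] {P : Measure Ω}

lemma measure_abs_eq_abs_eq_zero [IsFiniteMeasure P] {X Y : Ω → ℝ} (hX : Measurable X)
    (hY : Measurable Y) (hXY : IndepFun X Y P) [NullSingletonClass (P.map Y)] :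
    P {ω | |X ω| = |Y ω|} = 0 := by
  have hD : MeasurableSet {z : ℝ × ℝ | |z.1| = |z.2|} :=
    measurableSet_eq_fun (by fun_prop) (by fun_prop)
  have hsection (x : ℝ) : P.map Y (Prod.mk x ⁻¹' {z | |z.1| = |z.2|}) = 0 := by
    refine measure_mono_null (fun y hy => ?_) ((Set.toFinite {x, -x}).measure_zero _)
    rcases abs_eq_abs.1 (Eq.symm hy) with h | h
    · exact .inl h
    · exact .inr h
  rw [← Set.preimage_ofPred_eq (p := fun z : ℝ × ℝ => |z.1| = |z.2|) (f := fun ω => (X ω, Y ω)),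
    ← Measure.map_apply (hX.prodMk hY) hD,
    (indepFun_iff_map_prod_eq_prod_map_map hX.aemeasurable hY.aemeasurable).1 hXY,
    Measure.prod_apply hD, lintegral_congr hsection, lintegral_zero]

lemma measure_not_injOn_abs_eq_zero [IsFiniteMeasure P] {s : Finset ℕ} {V : ℕ → Ω → ℝ}
    (hV : ∀ i, Measurable (V i))
    (hindep : ∀ i ∈ s, ∀ j ∈ s, i ≠ j → IndepFun (V i) (V j) P)
    (hatoms : ∀ j ∈ s, NullSingletonClass (P.map (V j))) :
    P {ω | ¬ Set.InjOn (fun i => |V i ω|) s} = 0 := by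
  have hcover : {ω | ¬ Set.InjOn (fun i => |V i ω|) s} ⊆
      ⋃ ij ∈ (s.offDiag : Set (ℕ × ℕ)), {ω | |V ij.1 ω| = |V ij.2 ω|} := by
    intro ω hω
    simp only [Set.InjOn, not_forall] at hω
    obtain ⟨i, hi, j, hj, heq, hne⟩ := hω
    exact Set.mem_biUnion (x := (i, j)) (by simp [hi, hj, hne]) heq
  refine measure_mono_null hcover ((measure_biUnion_null_iff s.offDiag.countable_toSet).2 ?_)
  rintro ⟨i, j⟩ hij
  obtain ⟨hi, hj, hne⟩ := mem_offDiag.1 hij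
  have := hatoms j hj
  exact measure_abs_eq_abs_eq_zero (hV i) (hV j) (hindep i hi j hj hne)

lemma indepFun_of_iIndepFun_succ {n i j : ℕ} {V : ℕ → Ω → ℝ}
    (hindep : iIndepFun (fun k : Fin n => V (k.1 + 1)) P)
    (hi : i ∈ Icc 1 n) (hj : j ∈ Icc 1 n) (hij : i ≠ j) : IndepFun (V i) (V j) P := by
  obtain ⟨i, rfl⟩ := Nat.exists_eq_add_of_le' (mem_Icc.1 hi).1
  obtain ⟨j, rfl⟩ := Nat.exists_eq_add_of_le' (mem_Icc.1 hj).1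
  simp only [mem_Icc] at hi hj
  exact hindep.indepFun (i := ⟨i, by omega⟩) (j := ⟨j, by omega⟩) (by simpa using hij)

end Ties

noncomputable def absGaussianCDF (t : ℝ) : ℝ := (gaussianReal 0 1).real {x | |x| ≤ t}

lemma absGaussianCDF_sqrt {c : ℝ} (hc : 0 ≤ c) :
    absGaussianCDF √c = (gaussianReal 0 1).real {x | x ^ 2 ≤ c} := by
  simp_rw [absGaussianCDF, Real.le_sqrt (abs_nonneg _) hc, sq_abs]

lemma gaussianPDFReal_le_of_abs_sub_le {μ x y : ℝ} {v : NNReal} (h : |x - μ| ≤ |y - μ|) :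
    gaussianPDFReal μ v y ≤ gaussianPDFReal μ v x := by
  simp only [gaussianPDFReal]
  gcongr ?_ * Real.exp (-?_ / _)
  exact sq_le_sq.2 h

lemma absGaussianCDF_add_le {u v M : ℝ} (hu : 0 ≤ u) (huv : u ≤ v) (hvM : v ≤ M) :
    absGaussianCDF u + (v - u) * gaussianPDFReal 0 1 M ≤ absGaussianCDF v := by
  have hIoc : (v - u) * gaussianPDFReal 0 1 M ≤ (gaussianReal 0 1).real (Set.Ioc u v) := by
    rw [measureReal_def, gaussianReal_apply_eq_integral 0 one_ne_zero, ENNReal.toReal_ofReal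
      (setIntegral_nonneg measurableSet_Ioc fun _ _ => gaussianPDFReal_nonneg _ _ _)]
    have := setIntegral_ge_of_const_le_real measurableSet_Ioc (by simp)
      (fun x hx => gaussianPDFReal_le_of_abs_sub_le (by
        simpa using abs_le_abs_of_nonneg (hu.trans hx.1.le) (hx.2.trans hvM)))
      (integrable_gaussianPDFReal 0 1).integrableOn
    rwa [Real.volume_real_Ioc_of_le huv, mul_comm] at this
  have hdisj : Disjoint {x : ℝ | |x| ≤ u} (Set.Ioc u v) :=
    Set.disjoint_left.2 fun x hx hx' => (le_abs_self x).not_gt (hx.trans_lt hx'.1)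
  have hsub : {x : ℝ | |x| ≤ u} ∪ Set.Ioc u v ⊆ {x | |x| ≤ v} := by
    rintro x (hx | hx)
    · exact hx.trans huv
    · exact (abs_of_pos (hu.trans_lt hx.1)).trans_le hx.2
  calc absGaussianCDF u + (v - u) * gaussianPDFReal 0 1 M
      ≤ (gaussianReal 0 1).real ({x : ℝ | |x| ≤ u} ∪ Set.Ioc u v) := by
        rw [measureReal_union hdisj measurableSet_Ioc, absGaussianCDF]
        exact add_le_add_right hIoc _
    _ ≤ absGaussianCDF v := measureReal_mono hsub

lemma sub_two_lt_toNat_floor_floor_sub (y a : ℝ) :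
    y - 2 * a - 2 < ((⌊(⌊y - a⌋ : ℝ) - a⌋).toNat : ℝ) := by
  have h₁ := Int.sub_one_lt_floor (y - a)
  have h₂ := Int.sub_one_lt_floor ((⌊y - a⌋ : ℝ) - a)
  have h₃ : ((⌊(⌊y - a⌋ : ℝ) - a⌋ : ℤ) : ℝ) ≤ ((⌊(⌊y - a⌋ : ℝ) - a⌋).toNat : ℝ) := by
    exact_mod_cast Int.self_le_toNat _
  linarith

lemma toNat_floor_floor_sub_le {y a : ℝ} (h : 0 ≤ y - 2 * a) :
    ((⌊(⌊y - a⌋ : ℝ) - a⌋).toNat : ℝ) ≤ y - 2 * a := by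
  have h₁ := Int.floor_le (y - a)
  have h₂ := Int.floor_le ((⌊y - a⌋ : ℝ) - a)
  rw [← Int.cast_natCast, Int.toNat_eq_max, Int.cast_max, Int.cast_zero]
  exact max_le (by linarith) h

lemma eventually_natCast_rpow_neg_le {γ δ : ℝ} (hγ : 0 < γ) (hδ : 0 < δ) :
    ∀ᶠ n : ℕ in atTop, (n : ℝ) ^ (-γ) ≤ δ :=
  ((tendsto_rpow_neg_atTop hγ).comp tendsto_natCast_atTop_atTop).eventually_le_const hδ

lemma eventually_exp_neg_mul_rpow_le_rpow_neg {β b : ℝ} (hβ : 0 < β) (hb : 0 < b) (L : ℝ) :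
    ∀ᶠ x : ℝ in atTop, Real.exp (-b * x ^ β) ≤ x ^ (-L) := by
  have h := (tendsto_rpow_mul_exp_neg_mul_atTop_nhds_zero (L / β) b hb).comp
    (tendsto_rpow_atTop hβ)
  filter_upwards [h.eventually_le_const one_pos, eventually_gt_atTop 0] with x hx hx0
  rw [Function.comp_apply, ← Real.rpow_mul hx0.le, mul_div_cancel₀ _ hβ.ne'] at hx
  rw [Real.rpow_neg hx0.le, ← one_div, le_div_iff₀' (by positivity)]
  exact hx

noncomputable def quantileRank (α γ : ℝ) (n : ℕ) : ℕ :=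
  (⌊(⌊(1 - α) * (n : ℝ) - (n : ℝ) ^ (1 - γ)⌋ : ℝ) - (n : ℝ) ^ (1 - γ)⌋).toNat

lemma eventually_quantileRank_margins {α γ t Cc : ℝ} (hα0 : 0 < α) (hα1 : α < 1) (hγ0 : 0 < γ)
    (hγ1 : γ < 1) (ht : 0 < t) (hF : absGaussianCDF t = 1 - α)
    (hCc : 8 ≤ gaussianPDFReal 0 1 (2 * t) * Cc) :
    ∀ᶠ n : ℕ in atTop, quantileRank α γ n ≤ n ∧
      n * absGaussianCDF (t - Cc * (n : ℝ) ^ (-γ) / 2) + (n : ℝ) ^ (1 - γ) ≤ quantileRank α γ n ∧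
      (quantileRank α γ n : ℝ) - 1 + (n : ℝ) ^ (1 - γ)
        ≤ n * absGaussianCDF (t + Cc * (n : ℝ) ^ (-γ) / 2) := by
  have hκ : 0 < gaussianPDFReal 0 1 (2 * t) := gaussianPDFReal_pos _ _ _ one_ne_zero
  have hCc0 : 0 < Cc := pos_of_mul_pos_right (by linarith) hκ.le
  simp only [quantileRank]
  filter_upwards [eventually_natCast_rpow_neg_le hγ0 (div_pos (mul_pos two_pos ht) hCc0),
    eventually_natCast_rpow_neg_le hγ0 (by linarith : 0 < (1 - α) / 2),
    ((tendsto_rpow_atTop (by linarith : 0 < 1 - γ)).comp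
      tendsto_natCast_atTop_atTop).eventually_ge_atTop 2,
    eventually_ge_atTop 1] with n hsmall hgap ha hn
  simp only [Function.comp_apply] at ha
  set ε := Cc * (n : ℝ) ^ (-γ)
  set a := (n : ℝ) ^ (1 - γ)
  have hn0 : (0 : ℝ) < n := by exact_mod_cast hn
  have hna : (n : ℝ) * (n : ℝ) ^ (-γ) = a := by
    rw [← Real.rpow_one_add' hn0.le (by linarith), ← sub_eq_add_neg]
  have hε : ε ≤ 2 * t := (le_div_iff₀' hCc0).1 hsmall
  have hε0 : 0 ≤ ε := by positivity
  have hlowF := absGaussianCDF_add_le (u := t - ε / 2) (v := t) (M := 2 * t) (by linarith)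
    (by linarith) (by linarith)
  have hupF := absGaussianCDF_add_le (u := t) (v := t + ε / 2) (M := 2 * t) ht.le
    (by linarith) (by linarith)
  rw [hF] at hlowF hupF
  have hnε : (n : ℝ) * ε = Cc * a := by rw [← hna]; ring
  have h2a : 2 * a ≤ (1 - α) * n := by
    have := mul_le_mul_of_nonneg_left hgap hn0.le
    rw [hna] at this
    linarith
  have hr_lo := sub_two_lt_toNat_floor_floor_sub ((1 - α) * n) a
  have hr_hi := toNat_floor_floor_sub_le (y := (1 - α) * n) (a := a) (by linarith)
  have h8a := mul_le_mul_of_nonneg_right hCc (by linarith : (0 : ℝ) ≤ a)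
  have hlow : n * absGaussianCDF (t - ε / 2) ≤ (1 - α) * n - 4 * a := by
    nlinarith [mul_le_mul_of_nonneg_left hlowF hn0.le]
  have hup : (1 - α) * n + 4 * a ≤ n * absGaussianCDF (t + ε / 2) := by
    nlinarith [mul_le_mul_of_nonneg_left hupF hn0.le]
  refine ⟨?_, by linarith, by linarith⟩
  exact_mod_cast (hr_hi.trans (by nlinarith) : _ ≤ (n : ℝ))

section FiniteSample

variable {Ω : Type*} [MeasurableSpace Ω] {P : Measure Ω} [IsProbabilityMeasure P]

lemma measureReal_le_abs_orderStatIn_sub_le {n r : ℕ} {V : ℕ → Ω → ℝ}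
    (hV : ∀ j, Measurable (V j)) (hindep : iIndepFun (fun j : Fin n => V (j.1 + 1)) P)
    (hlaw : ∀ j ∈ Icc 1 n, P.map (V j) = gaussianReal 0 1)
    {t ε a : ℝ} (hε : 0 < ε) (ha : 0 < a) (hrn : r ≤ n)
    (hlow : n * absGaussianCDF (t - ε / 2) + a ≤ r)
    (hup : (r : ℝ) - 1 + a ≤ n * absGaussianCDF (t + ε / 2)) :
    P.real {ω | ε ≤ |orderStatIn (Icc 1 n) (fun i => |V i ω|) r - t|}
      ≤ 2 * Real.exp (-2 * a ^ 2 / n) := by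
  have hr : r ∈ Icc 1 #(Icc 1 n) := by
    have : (0 : ℝ) < r := by
      have : 0 ≤ (n : ℝ) * absGaussianCDF (t - ε / 2) := by unfold absGaussianCDF; positivity
      linarith
    rw [Nat.card_Icc, Nat.add_sub_cancel, mem_Icc]
    exact ⟨by exact_mod_cast this, hrn⟩
  have hn : (0 : ℝ) < n := by have := (mem_Icc.1 hr).1; exact_mod_cast (by omega : 0 < n)
  have hcount (s : ℝ) : HasSubgaussianMGF
      (fun ω => (#((Icc 1 n).filter fun k => |V k ω| ≤ s) : ℝ) - n * absGaussianCDF s) (n / 4) P :=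
    hasSubgaussianMGF_card_filter_Icc_le_sub (fun j => (hV j).abs)
      (hindep.comp (fun _ x => |x|) fun _ => measurable_abs) fun j hj => by
      rw [absGaussianCDF, ← hlaw j hj,
        map_measureReal_apply (hV j) (measurableSet_le (by fun_prop) measurable_const)]
      rfl
  have hties : P.real {ω | ¬ Set.InjOn (fun i => |V i ω|) (Icc 1 n)} = 0 :=
    (measureReal_eq_zero_iff).2 <| measure_not_injOn_abs_eq_zero hV
      (fun i hi j hj => indepFun_of_iIndepFun_succ hindep hi hj)
      fun j hj => hlaw j hj ▸ nullSingletonClass_gaussianReal one_ne_zero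
  have hcover : {ω | ε ≤ |orderStatIn (Icc 1 n) (fun i => |V i ω|) r - t|} ⊆
      {ω | ¬ Set.InjOn (fun i => |V i ω|) (Icc 1 n)} ∪
        ({ω | a ≤ (#((Icc 1 n).filter fun k => |V k ω| ≤ t - ε / 2) : ℝ)
            - n * absGaussianCDF (t - ε / 2)} ∪
          {ω | a ≤ -((#((Icc 1 n).filter fun k => |V k ω| ≤ t + ε / 2) : ℝ)
            - n * absGaussianCDF (t + ε / 2))}) := by
    intro ω hω
    by_cases hinj : Set.InjOn (fun i => |V i ω|) (Icc 1 n)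
    · rcases le_card_filter_or_card_filter_lt hinj hr hε hω with h | h
      · have : (r : ℝ) ≤ #((Icc 1 n).filter fun k => |V k ω| ≤ t - ε / 2) := by exact_mod_cast h
        exact .inr (.inl (by simp only [Set.mem_ofPred_eq]; linarith))
      · have : (#((Icc 1 n).filter fun k => |V k ω| ≤ t + ε / 2) : ℝ) + 1 ≤ r := by
          exact_mod_cast h
        exact .inr (.inr (by simp only [Set.mem_ofPred_eq]; linarith))
    · exact .inl hinj
  have hexp : Real.exp (-a ^ 2 / (2 * ((n / 4 : NNReal) : ℝ))) = Real.exp (-2 * a ^ 2 / n) := by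
    congr 1
    push_cast
    field_simp
    ring
  calc _ ≤ _ := measureReal_mono hcover
    _ ≤ _ := (measureReal_union_le _ _).trans (add_le_add le_rfl (measureReal_union_le _ _))
    _ ≤ 0 + (Real.exp (-2 * a ^ 2 / n) + Real.exp (-2 * a ^ 2 / n)) := by
      rw [hties, ← hexp]
      gcongr
      · exact (hcount _).measure_ge_le ha.le
      · exact (hcount _).neg.measure_ge_le ha.le
    _ = 2 * Real.exp (-2 * a ^ 2 / n) := by ring

end FiniteSample

/-- Lemma 4.6 (Lemma 2.10 of Inatsugu–Yoshida): for i.i.d. standard normal `W_1, …, W_n`,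
if the constant `Č` is sufficiently large then
`P[| |W|_{(â_n)} - c(α)^{1/2} | ≥ Č n^{-γ₂}] = O(n^{-L})` for every `L > 0`. -/
theorem stmt_12 {Ω : Type*} [MeasurableSpace Ω] (P : Measure Ω) [IsProbabilityMeasure P]
    (α γ₂ : ℝ) (hα : α ∈ Set.Ioo (0 : ℝ) 1) (hγ₂ : γ₂ ∈ Set.Ioo (0 : ℝ) (1 / 2))
    (W : ℕ → ℕ → Ω → ℝ) (hWmeas : ∀ n j, Measurable (W n j))
    (hWindep : ∀ n : ℕ, iIndepFun
      (fun j : Fin n => W n (j.1 + 1)) P)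
    (hWlaw : ∀ n : ℕ, ∀ j ∈ Finset.Icc 1 n, Measure.map (W n j) P = gaussianReal 0 1)
    (c : ℝ) (hc : 0 < c)
    (hcα : gaussianReal 0 1 {x : ℝ | x ^ 2 ≤ c} = ENNReal.ofReal (1 - α)) :
    ∃ Cc₀ : ℝ, 0 < Cc₀ ∧ ∀ Cc : ℝ, Cc₀ ≤ Cc → ∀ L : ℝ, 0 < L →
      ∃ C : ℝ, ∀ᶠ n : ℕ in atTop,
        (P {ω : Ω |
            Cc * (n : ℝ) ^ (-γ₂)
              ≤ abs (orderStatIn (Finset.Icc 1 n) (fun i => |W n i ω|)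
                  (⌊(⌊(1 - α) * (n : ℝ) - (n : ℝ) ^ (1 - γ₂)⌋ : ℝ)
                      - (n : ℝ) ^ (1 - γ₂)⌋).toNat
                  - Real.sqrt c)}).toReal
          ≤ C * (n : ℝ) ^ (-L) := by
  obtain ⟨hα0, hα1⟩ := hα
  obtain ⟨hγ0, hγ1⟩ := hγ₂
  have ht : 0 < √c := Real.sqrt_pos.2 hc
  have hF : absGaussianCDF √c = 1 - α := by
    rw [absGaussianCDF_sqrt hc.le, measureReal_def, hcα, ENNReal.toReal_ofReal (by linarith)]
  have hκ : 0 < gaussianPDFReal 0 1 (2 * √c) := gaussianPDFReal_pos _ _ _ one_ne_zero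
  refine ⟨8 / gaussianPDFReal 0 1 (2 * √c), by positivity, fun Cc hCc L _ => ⟨2, ?_⟩⟩
  have hCc0 : 0 < Cc := (by positivity : (0 : ℝ) < 8 / _).trans_le hCc
  filter_upwards [eventually_quantileRank_margins hα0 hα1 hγ0 (by linarith) ht hF
      ((div_le_iff₀' hκ).1 hCc),
    tendsto_natCast_atTop_atTop.eventually
      (eventually_exp_neg_mul_rpow_le_rpow_neg (by linarith : 0 < 1 - 2 * γ₂) two_pos L),
    eventually_ge_atTop 1] with n ⟨hrn, hlow, hup⟩ hexp hn
  have hn0 : (0 : ℝ) < n := by exact_mod_cast hn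
  have ha : ((n : ℝ) ^ (1 - γ₂)) ^ 2 / n = (n : ℝ) ^ (1 - 2 * γ₂) := by
    rw [← Real.rpow_natCast, ← Real.rpow_mul hn0.le, ← Real.rpow_sub_one hn0.ne']
    ring_nf
  rw [← measureReal_def]
  calc _ ≤ 2 * Real.exp (-2 * ((n : ℝ) ^ (1 - γ₂)) ^ 2 / n) :=
        measureReal_le_abs_orderStatIn_sub_le (hWmeas n) (hWindep n) (hWlaw n) (by positivity)
          (by positivity) hrn hlow hup
    _ ≤ 2 * (n : ℝ) ^ (-L) := by
      rw [mul_div_assoc, ha]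
      gcongr
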